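/- arXiv:1902.03662 — 4 statements merged into one kernel-verified Lean document; each statement's English description precedes it below -/
import Mathlib

section
/- Let ω = (−1 − i√3)/2, v₁ = ((i√3 − 1)/2, 1, 1), v₂ = ((i√3 − 1)/2, −ω, 1), v₄ = (1, 0, 0) in ℂ³, and ⟨v,w⟩ := conj(w)ᵗ J v with J having rows (0,0,1),(0,1,0),(1,0,0). Then arg(−⟨v₄,v₁⟩·⟨v₁,v₂⟩·⟨v₂,v₄⟩) = π/3. -/
/-!
Both forms against the lift `v₄ = (1, 0, 0)` of `∞` equal `1`, and `⟨v₁, v₂⟩ = ω`, so the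
triple product is `-ω = (1 + i√3)/2 = e^{iπ/3}`.
-/

/-- The Hermitian form ⟨v,w⟩ = conj(w)ᵗ J v with J having rows
(0,0,1),(0,1,0),(1,0,0). -/
def hermForm (v w : Fin 3 → ℂ) : ℂ :=
  (starRingEnd ℂ) (w 0) * v 2 + (starRingEnd ℂ) (w 1) * v 1 + (starRingEnd ℂ) (w 2) * v 0

open Complex ComplexConjugate Real

lemma hermForm_vec_one_zero_zero_left (a b c : ℂ) :
    hermForm ![1, 0, 0] ![a, b, c] = conj c := by
  simp [hermForm]

lemma hermForm_vec_one_zero_zero_right (a b c : ℂ) :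
    hermForm ![a, b, c] ![1, 0, 0] = c := by
  simp [hermForm]

lemma hermForm_vec_last_one (a b c d : ℂ) :
    hermForm ![a, b, 1] ![c, d, 1] = a + b * conj d + conj c := by
  simp [hermForm]; ring

lemma arg_one_add_sqrt_three_mul_I_div_two : arg ((1 + √3 * I) / 2) = π / 3 := by
  have h : (1 + √3 * I) / 2 = Real.cos (π / 3) + Real.sin (π / 3) * I := by
    rw [Real.cos_pi_div_three, Real.sin_pi_div_three]
    push_cast; ring
  rw [h, ofReal_cos, ofReal_sin,
    arg_cos_add_sin_mul_I ⟨by linarith [pi_pos], by linarith [pi_pos]⟩]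

/-- The Cartan angle Å(P₄,P₁,P₂) = π/3, where P₄ = ∞, P₁ = (1,√3),
P₂ = (−ω,√3) in the Heisenberg model. -/
theorem cartan_angle_P4_P1_P2 :
    letI ω : ℂ := (-1 - Complex.I * Real.sqrt 3) / 2
    letI v₁ : Fin 3 → ℂ := ![(Complex.I * Real.sqrt 3 - 1) / 2, 1, 1]
    letI v₂ : Fin 3 → ℂ := ![(Complex.I * Real.sqrt 3 - 1) / 2, -ω, 1]
    letI v₄ : Fin 3 → ℂ := ![1, 0, 0]
    Complex.arg (-(hermForm v₄ v₁ * hermForm v₁ v₂ * hermForm v₂ v₄)) = Real.pi / 3 := by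
  have h₁₂ : hermForm ![(I * √3 - 1) / 2, 1, 1] ![(I * √3 - 1) / 2, -((-1 - I * √3) / 2), 1]
      = (-1 - I * √3) / 2 := by
    simp only [hermForm_vec_last_one, map_div₀, map_sub, map_neg, map_mul, map_one, map_ofNat,
      conj_I, conj_ofReal]
    ring
  simp only [hermForm_vec_one_zero_zero_left, hermForm_vec_one_zero_zero_right, h₁₂, map_one]
  rw [← arg_one_add_sqrt_three_mul_I_div_two]
  congr 1
  ring
end

section
/- Let ω = (−1 − i√3)/2 and let G₁ be the 3×3 complex matrix with rows (−ω, 0, 0), (1, 1, 0), (−conj(ω), ω, −ω). Then G₁⁶ is a nonzero scalar multiple of the identity matrix, so G₁ has order dividing 6 in PGL(3,ℂ). -/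
/-! With `ω` a primitive cube root of unity, the lower-triangular matrix `G₁` has eigenvalues
`-ω, 1, -ω` and is annihilated by `(X + ω) (X - 1)`. Both roots of this polynomial are sixth
roots of unity and they are distinct, so it divides `X ^ 6 - 1`, whence `G₁ ^ 6 = 1`. -/

open Polynomial

theorem pow_eq_one_of_mul_sub_algebraMap_eq_zero {R A : Type*} [CommRing R] [Ring A]
    [Algebra R A] {x : A} {a b : R} {n : ℕ} (hab : IsUnit (a - b)) (ha : a ^ n = 1)
    (hb : b ^ n = 1) (hx : (x - algebraMap R A a) * (x - algebraMap R A b) = 0) :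
    x ^ n = 1 := by
  have hdvd : (X - C a) * (X - C b) ∣ (X ^ n - 1 : R[X]) :=
    (isCoprime_X_sub_C_of_isUnit_sub hab).mul_dvd
      (dvd_iff_isRoot.mpr (by simp [ha])) (dvd_iff_isRoot.mpr (by simp [hb]))
  obtain ⟨q, hq⟩ := hdvd
  have h := congrArg (aeval x) hq
  simp only [map_sub, map_pow, aeval_X, map_one, map_mul, aeval_C, hx, zero_mul] at h
  exact sub_eq_zero.mp h

section CubeRoot

variable {R : Type*} [CommRing R] {ω : R}

theorem neg_pow_six_of_sq_add_self_add_one (hω : ω ^ 2 + ω + 1 = 0) : (-ω) ^ 6 = 1 := by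
  linear_combination (ω ^ 4 - ω ^ 3 + ω - 1) * hω

theorem neg_ne_one_of_sq_add_self_add_one [Nontrivial R] (hω : ω ^ 2 + ω + 1 = 0) :
    -ω ≠ 1 := by
  intro h
  exact one_ne_zero (by linear_combination hω + ω * h : (1 : R) = 0)

theorem G1_mul_eq_zero_of_sq_add_self_add_one (hω : ω ^ 2 + ω + 1 = 0) :
    (!![-ω, 0, 0; 1, 1, 0; -(-1 - ω), ω, -ω] - algebraMap R _ (-ω)) *
      (!![-ω, 0, 0; 1, 1, 0; -(-1 - ω), ω, -ω] - algebraMap R _ 1) = 0 := by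
  rw [Matrix.algebraMap_eq_diagonal, Matrix.algebraMap_eq_diagonal]
  ext i j
  fin_cases i <;> fin_cases j <;> simp [Matrix.mul_apply, Fin.sum_univ_three]
  · ring
  · linear_combination -hω

end CubeRoot

theorem sq_add_self_add_one_of_eq_neg_one_sub_I_mul_sqrt_three_div_two :
    ((-1 - Complex.I * Real.sqrt 3) / 2) ^ 2 + (-1 - Complex.I * Real.sqrt 3) / 2 + 1 = 0 := by
  have hs : ((Real.sqrt 3 : ℝ) : ℂ) ^ 2 = 3 := by
    rw [← Complex.ofReal_pow, Real.sq_sqrt (by norm_num : (0:ℝ) ≤ 3)]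
    norm_num
  linear_combination (((Real.sqrt 3 : ℝ) : ℂ) ^ 2 / 4) * Complex.I_sq - (1 / 4 : ℂ) * hs

theorem conj_neg_one_sub_I_mul_sqrt_three_div_two :
    starRingEnd ℂ ((-1 - Complex.I * Real.sqrt 3) / 2) =
      -1 - (-1 - Complex.I * Real.sqrt 3) / 2 := by
  simp only [map_div₀, map_sub, map_mul, Complex.conj_I, Complex.conj_ofReal, map_neg, map_one,
    map_ofNat]
  ring

/-- G₁⁶ is a nonzero scalar multiple of the identity, so G₁ has order
dividing 6 in PGL(3,ℂ). -/
theorem G1_pow_six_scalar :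
    letI ω : ℂ := (-1 - Complex.I * Real.sqrt 3) / 2
    letI G₁ : Matrix (Fin 3) (Fin 3) ℂ :=
      !![-ω, 0, 0; 1, 1, 0; -(starRingEnd ℂ) ω, ω, -ω]
    ∃ c : ℂ, c ≠ 0 ∧ G₁ ^ 6 = c • (1 : Matrix (Fin 3) (Fin 3) ℂ) := by
  have hω := sq_add_self_add_one_of_eq_neg_one_sub_I_mul_sqrt_three_div_two
  refine ⟨1, one_ne_zero, ?_⟩
  rw [one_smul, conj_neg_one_sub_I_mul_sqrt_three_div_two]
  exact pow_eq_one_of_mul_sub_algebraMap_eq_zero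
    (sub_ne_zero.mpr (neg_ne_one_of_sq_add_self_add_one hω)).isUnit
    (neg_pow_six_of_sq_add_self_add_one hω) (one_pow 6) (G1_mul_eq_zero_of_sq_add_self_add_one hω)
end

section
/- Let ω = (−1 − i√3)/2, G₁ the matrix with rows (−ω,0,0),(1,1,0),(−conj(ω),ω,−ω), G₂ the matrix with rows (1,1,ω),(0,−conj(ω),conj(ω)),(0,0,1), G₃ = diag(1,−ω,1), and G₄ the matrix with rows (0,0,−ω),(0,−conj(ω),0),(−ω,0,1−conj(ω)). Then (G₂G₃)⁻¹·G₄⁻¹·G₃·G₁·G₄ is a nonzero scalar multiple of the identity matrix. -/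
/-!
`ω` is a primitive cube root of unity with `conj ω = ω²`, so every entry of the matrices is a
polynomial in `ω` and `ω' = conj ω`, and it suffices to argue in any commutative ring containing
a root `w` of `X² + X + 1` together with `w' = -1 - w`. There the holonomy identity is equivalent
to `G₃ G₁ G₄ = -w • G₄ G₂ G₃`, an entrywise identity modulo `w² + w + 1`, and
`det (G₄ G₂ G₃) = w` is a unit.
-/

theorem Matrix.inv_mul_eq_smul_one_of_eq_smul {n R : Type*} [Fintype n] [DecidableEq n]
    [CommRing R] {N M : Matrix n n R} (hN : IsUnit N.det) {c : R} (h : M = c • N) :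
    N⁻¹ * M = c • 1 := by
  rw [h, Matrix.mul_smul, Matrix.nonsing_inv_mul N hN]

theorem isUnit_of_sq_add_self_add_one_eq_zero {R : Type*} [CommRing R] {w : R}
    (hw : w ^ 2 + w + 1 = 0) : IsUnit w :=
  IsUnit.of_mul_eq_one (-w - 1) (by linear_combination -hw)

namespace FigureEight

variable {R : Type*} [CommRing R] {w w' : R}

def G₁ (w w' : R) : Matrix (Fin 3) (Fin 3) R := !![-w, 0, 0; 1, 1, 0; -w', w, -w]

def G₂ (w w' : R) : Matrix (Fin 3) (Fin 3) R := !![1, 1, w; 0, -w', w'; 0, 0, 1]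

def G₃ (w : R) : Matrix (Fin 3) (Fin 3) R := !![1, 0, 0; 0, -w, 0; 0, 0, 1]

def G₄ (w w' : R) : Matrix (Fin 3) (Fin 3) R := !![0, 0, -w; 0, -w', 0; -w, 0, 1 - w']

theorem G₃_mul_G₁_mul_G₄ (hw : w ^ 2 + w + 1 = 0) (hw' : w + w' = -1) :
    G₃ w * (G₁ w w' * G₄ w w') = (-w) • (G₄ w w' * (G₂ w w' * G₃ w)) := by
  simp only [G₁, G₂, G₃, G₄, Matrix.mul_fin_three, Matrix.smul_of, Matrix.smul_cons, smul_eq_mul,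
    Matrix.smul_empty, EmbeddingLike.apply_eq_iff_eq, Matrix.vecCons_inj, and_true]
  grind

theorem det_G₄_mul_G₂_mul_G₃ (hw : w ^ 2 + w + 1 = 0) (hw' : w + w' = -1) :
    (G₄ w w' * (G₂ w w' * G₃ w)).det = w := by
  simp only [Matrix.det_mul, G₂, G₃, G₄, Matrix.det_fin_three, Matrix.of_apply, Matrix.cons_val',
    Matrix.cons_val_zero, Matrix.cons_val_one, Matrix.cons_val_two, Matrix.cons_val_fin_one,
    Matrix.head_cons, Matrix.tail_cons, Matrix.head_fin_const]
  grind

theorem holonomy_eq_smul_one (hw : w ^ 2 + w + 1 = 0) (hw' : w + w' = -1) :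
    (G₂ w w' * G₃ w)⁻¹ * (G₄ w w')⁻¹ * G₃ w * G₁ w w' * G₄ w w' = (-w) • 1 := by
  rw [← Matrix.mul_inv_rev]
  simp only [Matrix.mul_assoc]
  refine Matrix.inv_mul_eq_smul_one_of_eq_smul ?_ (G₃_mul_G₁_mul_G₄ hw hw')
  rw [det_G₄_mul_G₂_mul_G₃ hw hw']
  exact isUnit_of_sq_add_self_add_one_eq_zero hw

end FigureEight

section PrimitiveCubeRoot

local notation "ω" => ((-1 - Complex.I * Real.sqrt 3) / 2 : ℂ)

theorem omega_sq_add_omega_add_one : ω ^ 2 + ω + 1 = 0 := by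
  have h3 : (Real.sqrt 3 : ℂ) ^ 2 = 3 := by norm_cast; simp
  linear_combination (1 / 4 : ℂ) * (Real.sqrt 3 : ℂ) ^ 2 * Complex.I_sq - (1 / 4 : ℂ) * h3

theorem omega_add_conj_omega : ω + (starRingEnd ℂ) ω = -1 := by
  rw [Complex.add_conj]
  norm_num

end PrimitiveCubeRoot

/-- Triviality of the geometric holonomy around the edge e_R of the branched
CR structure on the figure eight knot complement:
(G₂G₃)⁻¹·G₄⁻¹·G₃·G₁·G₄ is a nonzero scalar multiple of the identity. -/
theorem holonomy_figure_eight_eR_trivial :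
    letI ω : ℂ := (-1 - Complex.I * Real.sqrt 3) / 2
    letI G₁ : Matrix (Fin 3) (Fin 3) ℂ :=
      !![-ω, 0, 0; 1, 1, 0; -(starRingEnd ℂ) ω, ω, -ω]
    letI G₂ : Matrix (Fin 3) (Fin 3) ℂ :=
      !![1, 1, ω; 0, -(starRingEnd ℂ) ω, (starRingEnd ℂ) ω; 0, 0, 1]
    letI G₃ : Matrix (Fin 3) (Fin 3) ℂ := !![1, 0, 0; 0, -ω, 0; 0, 0, 1]
    letI G₄ : Matrix (Fin 3) (Fin 3) ℂ :=
      !![0, 0, -ω; 0, -(starRingEnd ℂ) ω, 0; -ω, 0, 1 - (starRingEnd ℂ) ω]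
    ∃ c : ℂ, c ≠ 0 ∧
      (G₂ * G₃)⁻¹ * G₄⁻¹ * G₃ * G₁ * G₄ = c • (1 : Matrix (Fin 3) (Fin 3) ℂ) := by
  have hω := omega_sq_add_omega_add_one
  exact ⟨_, neg_ne_zero.mpr (isUnit_of_sq_add_self_add_one_eq_zero hω).ne_zero,
    FigureEight.holonomy_eq_smul_one hω omega_add_conj_omega⟩
end

section
/- Let ω = (−1 − i√3)/2 and define Λ⁻¹(z,t) = ((i·t − |z|²)/2, z, 1) ∈ ℂ³. For every real s, the three vectors Λ⁻¹(0,0), Λ⁻¹(1,√3), and Λ⁻¹(−ω + e^{is}, √3·cos s − sin s) are linearly dependent over ℂ. -/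
/-!
For `w ≠ 0` the lift of `(z,t)` lies in the plane spanned by the lifts of `(0,0)` and `(w,t₀)`
exactly when `w (i t - |z|²) = z (i t₀ - |w|²)`. The curve projects to the circle of radius `1`
about `c = -ω = e^{iπ/3}`, through `0` and `1`. For `z = c + e` with `|e| = |c|` the height
`t = -2 Im(c̄ e)` gives `i t - |z|² = -2 c̄ z`, and `-2 c̄ = i√3 - 1` is the value at `(1, √3)`.
-/

/-- The lift Λ⁻¹(z,t) = ((i·t − |z|²)/2, z, 1) of a point of Heisenberg space. -/
noncomputable def heisLift (z : ℂ) (t : ℝ) : Fin 3 → ℂ :=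
  ![(Complex.I * t - (Complex.normSq z : ℂ)) / 2, z, 1]

open Complex ComplexConjugate

theorem not_linearIndependent_heisLift_of_mul_eq {w z : ℂ} {t₀ t : ℝ} (hw : w ≠ 0)
    (h : w * (I * t - normSq z) = z * (I * t₀ - normSq w)) :
    ¬ LinearIndependent ℂ ![heisLift 0 0, heisLift w t₀, heisLift z t] := by
  rw [Fintype.not_linearIndependent_iff]
  refine ⟨![z - w, -z, w], ?_, 2, hw⟩
  ext i
  fin_cases i <;> simp [heisLift, Fin.sum_univ_three] <;> first | ring1 | linear_combination h / 2

theorem I_mul_im_sub_normSq_add {c e : ℂ} (he : normSq e = normSq c) :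
    I * (-2 * (conj c * e).im : ℝ) - normSq (c + e) = (c + e) * (-2 * conj c) := by
  rw [normSq_apply, normSq_apply] at he
  apply Complex.ext <;> simp [normSq_apply] <;> linarith

/-- For every real s, the lifts of P₃ = (0,0), P₁ = (1,√3) and of the point
(−ω + e^{is}, √3·cos s − sin s) of the parametrised curve are linearly
dependent over ℂ: the curve lies on the ℂ-circle through P₃ and P₁. -/
theorem curve_on_C_circle (s : ℝ) :
    letI ω : ℂ := (-1 - Complex.I * Real.sqrt 3) / 2
    ¬ LinearIndependent ℂ
      ![heisLift 0 0, heisLift 1 (Real.sqrt 3),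
        heisLift (-ω + Complex.exp (Complex.I * s))
          (Real.sqrt 3 * Real.cos s - Real.sin s)] := by
  set c : ℂ := -((-1 - I * Real.sqrt 3) / 2)
  have hre : c.re = 1 / 2 := by norm_num [c]
  have him : c.im = Real.sqrt 3 / 2 := by norm_num [c, neg_div]
  have hc : normSq c = 1 := by
    rw [normSq_apply, hre, him]
    nlinarith [Real.sq_sqrt (show (0 : ℝ) ≤ 3 by norm_num)]
  have he : normSq (exp (I * s)) = normSq c := by
    rw [hc, mul_comm, normSq_eq_norm_sq, norm_exp_ofReal_mul_I, one_pow]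
  have ht : Real.sqrt 3 * Real.cos s - Real.sin s = -2 * (conj c * exp (I * s)).im := by
    rw [mul_comm I, exp_mul_I]
    simp only [mul_im, mul_re, add_re, add_im, conj_re, conj_im, hre, him, I_re, I_im, cos_ofReal_re,
      cos_ofReal_im, sin_ofReal_re, sin_ofReal_im]
    ring
  have hP₁ : I * Real.sqrt 3 - normSq 1 = -2 * conj c := by
    apply Complex.ext <;> norm_num [hre, him, mul_div_cancel₀]
  apply not_linearIndependent_heisLift_of_mul_eq one_ne_zero
  rw [one_mul, ht, hP₁]
  exact I_mul_im_sub_normSq_add he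
end
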